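/- arXiv:1109.2362 — 7 statements merged into one kernel-verified Lean document; each statement's English description precedes it below -/
import Mathlib

section
/- Let m₁, m₂ be two distinct even 2-characteristics. Among the eight even 2-characteristics n not belonging to {m₁, m₂}, exactly four satisfy {m₁, m₂, n} ∈ C₃⁻ and exactly four satisfy {m₁, m₂, n} ∈ C₃⁺. -/
open scoped Classical

/-- A 2-characteristic: a pair `m = (m', m'')` with `m', m'' ∈ (ZMod 2)²`. -/
abbrev Char2 : Type := (ZMod 2 × ZMod 2) × (ZMod 2 × ZMod 2)

/-- `m` is even if `m'₁·m''₁ + m'₂·m''₂ = 0` in `ZMod 2`. -/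
def IsEvenChar (m : Char2) : Prop := m.1.1 * m.2.1 + m.1.2 * m.2.2 = 0

/-- `m` is odd if it is not even. -/
def IsOddChar (m : Char2) : Prop := ¬ IsEvenChar m

/-- The finset of all (10) even 2-characteristics. -/
noncomputable def EvenChars : Finset Char2 := Finset.univ.filter IsEvenChar

/-- `C₃⁻`: 3-element sets of even characteristics whose sum is odd. -/
def C3minus (M : Finset Char2) : Prop :=
  M ⊆ EvenChars ∧ M.card = 3 ∧ IsOddChar (∑ m ∈ M, m)

/-- `C₃⁺`: 3-element sets of even characteristics whose sum is even. -/
def C3plus (M : Finset Char2) : Prop :=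
  M ⊆ EvenChars ∧ M.card = 3 ∧ IsEvenChar (∑ m ∈ M, m)

/-- `C₄⁻`: 4-element sets of even characteristics all of whose 3-element subsets lie in `C₃⁻`. -/
def C4minus (M : Finset Char2) : Prop :=
  M ⊆ EvenChars ∧ M.card = 4 ∧ ∀ T ⊆ M, T.card = 3 → C3minus T

/-- `C₄⁺`: 4-element sets of even characteristics all of whose 3-element subsets lie in `C₃⁺`. -/
def C4plus (M : Finset Char2) : Prop :=
  M ⊆ EvenChars ∧ M.card = 4 ∧ ∀ T ⊆ M, T.card = 3 → C3plus T

/-- `C₅⁻`: 5-element sets of even characteristics containing exactly one element of `C₄⁻`. -/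
def C5minus (M : Finset Char2) : Prop :=
  M ⊆ EvenChars ∧ M.card = 5 ∧ ∃! T, T ⊆ M ∧ C4minus T

/-- `C₅⁺`: 5-element sets of even characteristics containing exactly one element of `C₄⁺`. -/
def C5plus (M : Finset Char2) : Prop :=
  M ⊆ EvenChars ∧ M.card = 5 ∧ ∃! T, T ⊆ M ∧ C4plus T

/-- `C₆⁻`: 6-element sets of even characteristics whose complement lies in `C₄⁺`. -/
def C6minus (M : Finset Char2) : Prop :=
  M ⊆ EvenChars ∧ M.card = 6 ∧ C4plus (EvenChars \ M)

/-- `C₆⁺`: 6-element sets of even characteristics whose complement lies in `C₄⁻`. -/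
def C6plus (M : Finset Char2) : Prop :=
  M ⊆ EvenChars ∧ M.card = 6 ∧ C4minus (EvenChars \ M)

def EC : Finset Char2 :=
  Finset.univ.filter (fun m => m.1.1 * m.2.1 + m.1.2 * m.2.2 = 0)

set_option maxRecDepth 10000 in
theorem key_four_and_four : ∀ m₁ m₂ : Char2,
    m₁.1.1 * m₁.2.1 + m₁.1.2 * m₁.2.2 = 0 →
    m₂.1.1 * m₂.2.1 + m₂.1.2 * m₂.2.2 = 0 → m₁ ≠ m₂ →
    ((EC \ {m₁, m₂}).filter (fun n => ({m₁, m₂, n} : Finset _) ⊆ EC ∧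
        ({m₁, m₂, n} : Finset _).card = 3 ∧
        ¬ ((∑ m ∈ ({m₁, m₂, n} : Finset _), m).1.1 * (∑ m ∈ ({m₁, m₂, n} : Finset _), m).2.1
          + (∑ m ∈ ({m₁, m₂, n} : Finset _), m).1.2 * (∑ m ∈ ({m₁, m₂, n} : Finset _), m).2.2 = 0))).card = 4 ∧
    ((EC \ {m₁, m₂}).filter (fun n => ({m₁, m₂, n} : Finset _) ⊆ EC ∧
        ({m₁, m₂, n} : Finset _).card = 3 ∧
        ((∑ m ∈ ({m₁, m₂, n} : Finset _), m).1.1 * (∑ m ∈ ({m₁, m₂, n} : Finset _), m).2.1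
          + (∑ m ∈ ({m₁, m₂, n} : Finset _), m).1.2 * (∑ m ∈ ({m₁, m₂, n} : Finset _), m).2.2 = 0))).card = 4 := by
  decide

theorem four_and_four (m₁ m₂ : Char2) (h₁ : IsEvenChar m₁) (h₂ : IsEvenChar m₂)
    (hne : m₁ ≠ m₂) :
    ((EvenChars \ {m₁, m₂}).filter (fun n => C3minus {m₁, m₂, n})).card = 4 ∧
    ((EvenChars \ {m₁, m₂}).filter (fun n => C3plus {m₁, m₂, n})).card = 4 := by
  have hEC : EvenChars = EC := Finset.filter_congr (fun x _ => Iff.rfl)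
  simp only [C3minus, C3plus, IsOddChar, IsEvenChar, hEC]
  convert key_four_and_four m₁ m₂ h₁ h₂ hne using 3
end

section
/- Let {m₁, m₂, m₃} ∈ C₃⁻. There is exactly one even 2-characteristic n such that {m₁, m₂, m₃, n} ∈ C₄⁻. -/
open scoped Classical

attribute [-instance] Classical.propDecidable

instance : DecidablePred IsEvenChar := fun m => by unfold IsEvenChar; infer_instance

lemma char2_add_self (x : Char2) : x + x = 0 := by
  revert x; decide

set_option maxHeartbeats 8000000
set_option maxRecDepth 10000

/-- Pure-arithmetic core: existence and uniqueness of the completion. -/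
lemma arith : ∀ a b c : Char2, IsEvenChar a → IsEvenChar b → IsEvenChar c →
    ¬ IsEvenChar (a + b + c) →
    ∃ n : Char2, (IsEvenChar n ∧ ¬ IsEvenChar (a + b + n) ∧ ¬ IsEvenChar (a + c + n) ∧
        ¬ IsEvenChar (b + c + n)) ∧
      ∀ y : Char2, (IsEvenChar y ∧ ¬ IsEvenChar (a + b + y) ∧ ¬ IsEvenChar (a + c + y) ∧
        ¬ IsEvenChar (b + c + y)) → y = n := by
  decide

lemma mem_evenChars {x : Char2} : x ∈ EvenChars ↔ IsEvenChar x := by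
  simp [EvenChars, Finset.mem_filter]

theorem unique_completion_C4minus (m₁ m₂ m₃ : Char2)
    (h : C3minus {m₁, m₂, m₃}) :
    ∃! n : Char2, IsEvenChar n ∧ C4minus {m₁, m₂, m₃, n} := by
  obtain ⟨hsub, hcard, hodd⟩ := h
  -- distinctness
  have h12 : m₁ ≠ m₂ := by
    rintro rfl
    have he : ({m₁, m₁, m₃} : Finset Char2) = {m₁, m₃} := by
      ext x; simp; try tauto
    rw [he] at hcard
    have := Finset.card_insert_le m₁ ({m₃} : Finset Char2)
    simp at this
    omega
  have h13 : m₁ ≠ m₃ := by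
    rintro rfl
    have he : ({m₁, m₂, m₁} : Finset Char2) = {m₁, m₂} := by
      ext x; simp; try tauto
    rw [he] at hcard
    have := Finset.card_insert_le m₁ ({m₂} : Finset Char2)
    simp at this
    omega
  have h23 : m₂ ≠ m₃ := by
    rintro rfl
    have he : ({m₁, m₂, m₂} : Finset Char2) = {m₁, m₂} := by
      ext x; simp; try tauto
    rw [he] at hcard
    have := Finset.card_insert_le m₁ ({m₂} : Finset Char2)
    simp at this
    omega
  -- evenness
  have he1 : IsEvenChar m₁ := mem_evenChars.mp (hsub (by simp))
  have he2 : IsEvenChar m₂ := mem_evenChars.mp (hsub (by simp))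
  have he3 : IsEvenChar m₃ := mem_evenChars.mp (hsub (by simp))
  -- the sum
  have hsum : (∑ m ∈ ({m₁, m₂, m₃} : Finset Char2), m) = m₁ + m₂ + m₃ := by
    rw [Finset.sum_insert (by simp [h12, h13]), Finset.sum_insert (by simp [h23]),
      Finset.sum_singleton, ← add_assoc]
  rw [IsOddChar, hsum] at hodd
  obtain ⟨n, ⟨hne, h12n, h13n, h23n⟩, huniq⟩ := arith m₁ m₂ m₃ he1 he2 he3 hodd
  -- arithmetic conditions force the new element to be distinct from m₁, m₂, m₃
  have hdist : ∀ y : Char2, ¬ IsEvenChar (m₁ + m₂ + y) → ¬ IsEvenChar (m₁ + m₃ + y) →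
      y ≠ m₁ ∧ y ≠ m₂ ∧ y ≠ m₃ := by
    intro y hA hB
    refine ⟨?_, ?_, ?_⟩
    · intro hEq
      rw [hEq] at hA
      exact hA (by rw [show m₁ + m₂ + m₁ = m₁ + m₁ + m₂ by ring, char2_add_self, zero_add]; exact he2)
    · intro hEq
      rw [hEq] at hA
      exact hA (by rw [show m₁ + m₂ + m₂ = m₁ + (m₂ + m₂) by ring, char2_add_self, add_zero]; exact he1)
    · intro hEq
      rw [hEq] at hB
      exact hB (by rw [show m₁ + m₃ + m₃ = m₁ + (m₃ + m₃) by ring, char2_add_self, add_zero]; exact he1)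
  -- C3minus for explicit triples
  have hC3 : ∀ x y z : Char2, x ≠ y → x ≠ z → y ≠ z → IsEvenChar x → IsEvenChar y →
      IsEvenChar z → ¬ IsEvenChar (x + y + z) → C3minus {x, y, z} := by
    intro x y z hxy hxz hyz hx hy hz hodd'
    refine ⟨?_, ?_, ?_⟩
    · intro t ht
      simp only [Finset.mem_insert, Finset.mem_singleton] at ht
      rcases ht with rfl | rfl | rfl <;> exact mem_evenChars.mpr (by assumption)
    · rw [Finset.card_insert_of_notMem (by simp [hxy, hxz]),
        Finset.card_insert_of_notMem (by simp [hyz]), Finset.card_singleton]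
    · rw [IsOddChar, Finset.sum_insert (by simp [hxy, hxz]),
        Finset.sum_insert (by simp [hyz]), Finset.sum_singleton, ← add_assoc]
      exact hodd'
  -- C4minus for a quadruple with the arithmetic properties
  have hC4 : ∀ y : Char2, IsEvenChar y →
      ¬ IsEvenChar (m₁ + m₂ + y) → ¬ IsEvenChar (m₁ + m₃ + y) → ¬ IsEvenChar (m₂ + m₃ + y) →
      C4minus {m₁, m₂, m₃, y} := by
    intro y hy hodd12 hodd13 hodd23
    obtain ⟨hy1, hy2, hy3⟩ := hdist y hodd12 hodd13
    have hMcard : ({m₁, m₂, m₃, y} : Finset Char2).card = 4 := by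
      rw [Finset.card_insert_of_notMem (by simp [h12, h13, Ne.symm hy1]),
        Finset.card_insert_of_notMem (by simp [h23, Ne.symm hy2]),
        Finset.card_insert_of_notMem (by simp [Ne.symm hy3]), Finset.card_singleton]
    refine ⟨?_, hMcard, ?_⟩
    · intro t ht
      simp only [Finset.mem_insert, Finset.mem_singleton] at ht
      rcases ht with rfl | rfl | rfl | rfl <;> exact mem_evenChars.mpr (by assumption)
    · intro T hT hT3
      have hdiffcard : (({m₁, m₂, m₃, y} : Finset Char2) \ T).card = 1 := by
        rw [Finset.card_sdiff_of_subset hT, hMcard, hT3]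
      obtain ⟨x, hx⟩ := Finset.card_eq_one.mp hdiffcard
      have hTeq : T = ({m₁, m₂, m₃, y} : Finset Char2) \ {x} := by
        rw [← hx, Finset.sdiff_sdiff_eq_self hT]
      have hxmem : x ∈ ({m₁, m₂, m₃, y} : Finset Char2) := by
        have hx' : x ∈ ({m₁, m₂, m₃, y} : Finset Char2) \ T :=
          hx ▸ Finset.mem_singleton_self x
        exact (Finset.mem_sdiff.mp hx').1
      simp only [Finset.mem_insert, Finset.mem_singleton] at hxmem
      rw [← Finset.erase_eq] at hTeq
      rcases hxmem with rfl | rfl | rfl | rfl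
      · have hTe : T = ({m₂, m₃, y} : Finset Char2) := by
          rw [hTeq, Finset.erase_insert (by simp [h12, h13, Ne.symm hy1])]
        rw [hTe]
        exact hC3 m₂ m₃ y h23 (Ne.symm hy2) (Ne.symm hy3) he2 he3 hy hodd23
      · have hTe : T = ({m₁, m₃, y} : Finset Char2) := by
          rw [hTeq, Finset.erase_insert_of_ne h12,
            Finset.erase_insert (by simp [h23, Ne.symm hy2])]
        rw [hTe]
        exact hC3 m₁ m₃ y h13 (Ne.symm hy1) (Ne.symm hy3) he1 he3 hy hodd13
      · have hTe : T = ({m₁, m₂, y} : Finset Char2) := by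
          rw [hTeq, Finset.erase_insert_of_ne h13,
            Finset.erase_insert_of_ne h23,
            Finset.erase_insert (by simp [Ne.symm hy3])]
        rw [hTe]
        exact hC3 m₁ m₂ y h12 (Ne.symm hy1) (Ne.symm hy2) he1 he2 hy hodd12
      · have hTe : T = ({m₁, m₂, m₃} : Finset Char2) := by
          rw [hTeq, Finset.erase_insert_of_ne (Ne.symm hy1),
            Finset.erase_insert_of_ne (Ne.symm hy2),
            Finset.erase_insert_of_ne (Ne.symm hy3), Finset.erase_singleton]
          simp
        rw [hTe]
        exact hC3 m₁ m₂ m₃ h12 h13 h23 he1 he2 he3 hodd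
  -- main proof
  refine ⟨n, ⟨hne, hC4 n hne h12n h13n h23n⟩, ?_⟩
  rintro y ⟨hy, hysub, hycard, hyT⟩
  -- y is distinct from m₁, m₂, m₃ since the quadruple has cardinality 4
  have hy1 : y ≠ m₁ := by
    intro hEq
    rw [hEq] at hycard
    have he : ({m₁, m₂, m₃, m₁} : Finset Char2) = {m₁, m₂, m₃} := by
      ext x; simp; try tauto
    rw [he, hcard] at hycard
    omega
  have hy2 : y ≠ m₂ := by
    intro hEq
    rw [hEq] at hycard
    have he : ({m₁, m₂, m₃, m₂} : Finset Char2) = {m₁, m₂, m₃} := by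
      ext x; simp; try tauto
    rw [he, hcard] at hycard
    omega
  have hy3 : y ≠ m₃ := by
    intro hEq
    rw [hEq] at hycard
    have he : ({m₁, m₂, m₃, m₃} : Finset Char2) = {m₁, m₂, m₃} := by
      ext x; simp; try tauto
    rw [he, hcard] at hycard
    omega
  -- extract oddness of the three sums from the C3minus property of 3-subsets
  have godd : ∀ u v : Char2, u ≠ v → u ≠ y → v ≠ y →
      ({u, v, y} : Finset Char2) ⊆ {m₁, m₂, m₃, y} → ¬ IsEvenChar (u + v + y) := by
    intro u v huv huy hvy hsub'
    have hc : ({u, v, y} : Finset Char2).card = 3 := by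
      rw [Finset.card_insert_of_notMem (by simp [huv, huy]),
        Finset.card_insert_of_notMem (by simp [hvy]), Finset.card_singleton]
    obtain ⟨_, _, hodd'⟩ := hyT _ hsub' hc
    rw [IsOddChar, Finset.sum_insert (by simp [huv, huy]),
      Finset.sum_insert (by simp [hvy]), Finset.sum_singleton, ← add_assoc] at hodd'
    exact hodd'
  have g12 : ¬ IsEvenChar (m₁ + m₂ + y) := godd m₁ m₂ h12 (Ne.symm hy1) (Ne.symm hy2)
    (by intro t ht; simp at ht ⊢; tauto)
  have g13 : ¬ IsEvenChar (m₁ + m₃ + y) := godd m₁ m₃ h13 (Ne.symm hy1) (Ne.symm hy3)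
    (by intro t ht; simp at ht ⊢; tauto)
  have g23 : ¬ IsEvenChar (m₂ + m₃ + y) := godd m₂ m₃ h23 (Ne.symm hy2) (Ne.symm hy3)
    (by intro t ht; simp at ht ⊢; tauto)
  exact huniq y ⟨hy, g12, g13, g23⟩
end

section
/- Let h₁, h₂ be two distinct even 2-characteristics. There are exactly two sets M ∈ C₄⁻ with {h₁, h₂} ⊆ M. -/
open scoped Classical

instance decEven : DecidablePred IsEvenChar := fun m => by unfold IsEvenChar; infer_instance

instance decOdd : DecidablePred IsOddChar := fun m => by unfold IsOddChar; infer_instance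

/-- Computable version of `EvenChars`. -/
def myEvens : Finset Char2 := Finset.univ.filter IsEvenChar

lemma evens_eq : EvenChars = myEvens := by
  ext m; simp [EvenChars, myEvens]

def oddsum (T : Finset Char2) : Prop := IsOddChar (∑ m ∈ T, m)

instance decOddsum : DecidablePred oddsum := fun T => by unfold oddsum; infer_instance

/-- The finset of candidate quadruples through `h₁, h₂`. -/
def good (h₁ h₂ : Char2) : Finset (Finset Char2) :=
  (myEvens.powersetCard 4).filter fun M =>
    h₁ ∈ M ∧ h₂ ∈ M ∧ ((M.powersetCard 3).filter oddsum).card = 4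

set_option maxRecDepth 10000 in
lemma key : ∀ h₁ ∈ myEvens, ∀ h₂ ∈ myEvens, h₁ ≠ h₂ → (good h₁ h₂).card = 2 := by decide

lemma set_eq (h₁ h₂ : Char2) :
    {M : Finset Char2 | C4minus M ∧ h₁ ∈ M ∧ h₂ ∈ M} = ↑(good h₁ h₂) := by
  ext M
  simp only [Set.mem_setOf_eq, good, Finset.coe_filter, Finset.mem_powersetCard,
    Set.mem_setOf_eq, C4minus]
  constructor
  · rintro ⟨⟨hsub, hcard, hall⟩, hm1, hm2⟩
    refine ⟨⟨by rwa [← evens_eq], hcard⟩, hm1, hm2, ?_⟩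
    have hfe : (M.powersetCard 3).filter oddsum = M.powersetCard 3 := by
      rw [Finset.filter_eq_self]
      intro T hT
      rw [Finset.mem_powersetCard] at hT
      exact (hall T hT.1 hT.2).2.2
    rw [hfe, Finset.card_powersetCard, hcard]; decide
  · rintro ⟨⟨hsub, hcard⟩, hm1, hm2, hfc⟩
    refine ⟨⟨by rwa [evens_eq], hcard, ?_⟩, hm1, hm2⟩
    intro T hTM hT3
    have hfe : (M.powersetCard 3).filter oddsum = M.powersetCard 3 := by
      apply Finset.eq_of_subset_of_card_le (Finset.filter_subset _ _)
      rw [hfc, Finset.card_powersetCard, hcard]; decide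
    have hTmem : T ∈ M.powersetCard 3 := Finset.mem_powersetCard.mpr ⟨hTM, hT3⟩
    have : T ∈ (M.powersetCard 3).filter oddsum := by rw [hfe]; exact hTmem
    refine ⟨fun x hx => ?_, hT3, (Finset.mem_filter.mp this).2⟩
    rw [evens_eq]; exact hsub (hTM hx)

theorem two_C4minus_through_pair (h₁ h₂ : Char2) (he₁ : IsEvenChar h₁) (he₂ : IsEvenChar h₂)
    (hne : h₁ ≠ h₂) :
    {M : Finset Char2 | C4minus M ∧ h₁ ∈ M ∧ h₂ ∈ M}.ncard = 2 := by
  rw [set_eq, Set.ncard_coe_finset]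
  exact key h₁ (by simp [myEvens, he₁]) h₂ (by simp [myEvens, he₂]) hne
end

section
/- Let M₁, M₂ ∈ C₄⁻ with M₁ ∩ M₂ = {n} a single characteristic. Then the set (Cᵉ \ (M₁ ∪ M₂)) ∪ {n}, where Cᵉ denotes the set of all 10 even 2-characteristics, lies in C₄⁻. (Equivalently: if {m₁, m₂, m₃, n} ∈ C₄⁻ and {m₄, m₅, m₆, n} ∈ C₄⁻ with m₁,…,m₆, n all distinct, then {h₁, h₂, h₃, n} ∈ C₄⁻, where {h₁, h₂, h₃} is the complement of {m₁, …, m₆, n} in Cᵉ.) -/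
open scoped Classical

set_option maxRecDepth 400000

/-- Boolean evenness check. -/
def evenB (m : Char2) : Bool := m.1.1 * m.2.1 + m.1.2 * m.2.2 == 0

def E' : Finset Char2 := Finset.univ.filter (fun m => evenB m)
def badTripleB (T : Finset Char2) : Bool := (T.card == 3) && evenB (∑ m ∈ T, m)
def PB (M : Finset Char2) : Bool := (M.powerset.filter (fun T => badTripleB T)).card == 0
def C4L : Finset (Finset Char2) := (E'.powersetCard 4).filter (fun M => PB M)

lemma E_eq : EvenChars = E' := Finset.ext fun x => by
  simp [EvenChars, E', evenB, IsEvenChar, Finset.mem_filter]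

lemma key_s7 : (((C4L ×ˢ C4L) ×ˢ E').filter (fun p =>
    p.1.1 ∩ p.1.2 = {p.2} ∧ ((E' \ (p.1.1 ∪ p.1.2)) ∪ {p.2}) ∉ C4L)).card = 0 := by
  decide

lemma key' : ∀ M₁ ∈ C4L, ∀ M₂ ∈ C4L, ∀ n ∈ E', M₁ ∩ M₂ = {n} →
    ((E' \ (M₁ ∪ M₂)) ∪ {n}) ∈ C4L := by
  intro M₁ h1 M₂ h2 n hn hi
  by_contra hc
  have hmem : (((M₁, M₂), n)) ∈ ((C4L ×ˢ C4L) ×ˢ E') := by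
    simp [Finset.mem_product, h1, h2, hn]
  have hmem2 : (((M₁, M₂), n)) ∈ (((C4L ×ˢ C4L) ×ˢ E').filter (fun p =>
      p.1.1 ∩ p.1.2 = {p.2} ∧ ((E' \ (p.1.1 ∪ p.1.2)) ∪ {p.2}) ∉ C4L)) :=
    Finset.mem_filter.2 ⟨hmem, hi, hc⟩
  have h0 := key_s7
  rw [Finset.card_eq_zero] at h0
  rw [h0] at hmem2
  exact absurd hmem2 (Finset.notMem_empty _)

lemma PB_iff (M : Finset Char2) : PB M = true ↔ ∀ T ⊆ M, T.card = 3 → IsOddChar (∑ m ∈ T, m) := by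
  unfold PB
  rw [beq_iff_eq, Finset.card_eq_zero, Finset.filter_eq_empty_iff]
  constructor
  · intro h T hT h3
    have := h (Finset.mem_powerset.2 hT)
    simp [badTripleB, h3, evenB, IsOddChar, IsEvenChar] at this ⊢
    exact this
  · intro h T hT
    have := h T (Finset.mem_powerset.1 hT)
    simp [badTripleB, evenB, IsOddChar, IsEvenChar] at this ⊢
    exact this

lemma C4_iff (M : Finset Char2) : M ∈ C4L ↔ C4minus M := by
  rw [C4L, Finset.mem_filter, Finset.mem_powersetCard, PB_iff, ← E_eq, C4minus]
  constructor
  · rintro ⟨⟨hsub, hcard⟩, h⟩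
    exact ⟨hsub, hcard, fun T hT h3 => ⟨hT.trans hsub, h3, h T hT h3⟩⟩
  · rintro ⟨hsub, hcard, h⟩
    exact ⟨⟨hsub, hcard⟩, fun T hT h3 => (h T hT h3).2.2⟩

theorem complement_C4minus_of_inter_singleton (M₁ M₂ : Finset Char2) (n : Char2)
    (h₁ : C4minus M₁) (h₂ : C4minus M₂) (hinter : M₁ ∩ M₂ = {n}) :
    C4minus ((EvenChars \ (M₁ ∪ M₂)) ∪ {n}) := by
  have hn : n ∈ M₁ := by
    have h := Finset.mem_singleton_self n
    rw [← hinter] at h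
    exact (Finset.mem_inter.1 h).1
  have hnE : n ∈ E' := by rw [← E_eq]; exact h₁.1 hn
  rw [E_eq]
  exact (C4_iff _).1 (key' M₁ ((C4_iff _).2 h₁) M₂ ((C4_iff _).2 h₂) n hnE hinter)
end

section
/- Let M be a 5-element set of even 2-characteristics with M ∉ C₅⁻. Then no 4-element subset of M lies in C₄⁻. -/
open scoped Classical

/-! ### Auxiliary machinery -/

instance instDecIsEvenChar : DecidablePred IsEvenChar := fun m =>
  decidable_of_iff (m.1.1 * m.2.1 + m.1.2 * m.2.2 = 0) Iff.rfl

instance instDecIsOddChar : DecidablePred IsOddChar := fun m =>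
  @instDecidableNot _ (instDecIsEvenChar m)

/-- Explicit list of the 10 even characteristics. -/
def evenList : List Char2 :=
  [((0,0),(0,0)), ((0,0),(0,1)), ((0,0),(1,0)), ((0,0),(1,1)), ((0,1),(0,0)),
   ((0,1),(1,0)), ((1,0),(0,0)), ((1,0),(0,1)), ((1,1),(0,0)), ((1,1),(1,1))]

lemma mem_evenList : ∀ m : Char2, IsEvenChar m → m ∈ evenList := by decide

/-- Boolean check: no 5 even characteristics `s1,s2,s3,a,b` with `a ≠ b` can have all
seven relevant triple sums odd. -/
def checkAll : Bool :=
  evenList.all fun s1 => evenList.all fun s2 => evenList.all fun s3 =>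
    evenList.all fun a => evenList.all fun b =>
      decide (a = b) ||
      !(decide (IsOddChar (s1+s2+s3)) && decide (IsOddChar (s1+s2+a)) &&
        decide (IsOddChar (s1+s3+a)) && decide (IsOddChar (s2+s3+a)) &&
        decide (IsOddChar (s1+s2+b)) && decide (IsOddChar (s1+s3+b)) &&
        decide (IsOddChar (s2+s3+b)))

set_option maxRecDepth 100000 in
set_option maxHeartbeats 2000000 in
lemma checkAll_true : checkAll = true := by decide

lemma key5 {s1 s2 s3 a b : Char2}
    (hs1 : IsEvenChar s1) (hs2 : IsEvenChar s2) (hs3 : IsEvenChar s3)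
    (ha : IsEvenChar a) (hb : IsEvenChar b) (hab : a ≠ b)
    (o1 : IsOddChar (s1+s2+s3)) (o2 : IsOddChar (s1+s2+a)) (o3 : IsOddChar (s1+s3+a))
    (o4 : IsOddChar (s2+s3+a)) (o5 : IsOddChar (s1+s2+b)) (o6 : IsOddChar (s1+s3+b))
    (o7 : IsOddChar (s2+s3+b)) : False := by
  have h := checkAll_true
  simp only [checkAll, List.all_eq_true] at h
  have h' := h s1 (mem_evenList s1 hs1) s2 (mem_evenList s2 hs2) s3 (mem_evenList s3 hs3)
    a (mem_evenList a ha) b (mem_evenList b hb)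
  simp only [Bool.or_eq_true, Bool.and_eq_true, Bool.not_eq_true', Bool.and_eq_false_iff,
    decide_eq_true_iff, decide_eq_false_iff_not] at h'
  rcases h' with h' | h'
  · exact hab h'
  · tauto

lemma even_of_mem {m : Char2} (hm : m ∈ EvenChars) : IsEvenChar m := by
  simpa [EvenChars] using hm

lemma oddTriple {T : Finset Char2} (hC : C4minus T) {x y z : Char2}
    (hx : x ∈ T) (hy : y ∈ T) (hz : z ∈ T)
    (hxy : x ≠ y) (hxz : x ≠ z) (hyz : y ≠ z) : IsOddChar (x + y + z) := by
  have hsub : ({x, y, z} : Finset Char2) ⊆ T := by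
    intro t ht
    simp only [Finset.mem_insert, Finset.mem_singleton] at ht
    rcases ht with rfl | rfl | rfl <;> assumption
  have hcard : ({x, y, z} : Finset Char2).card = 3 := by
    rw [Finset.card_insert_of_notMem (by simp [hxy, hxz]),
      Finset.card_insert_of_notMem (by simp [hyz]), Finset.card_singleton]
  have h3 := (hC.2.2 _ hsub hcard).2.2
  have hsum : (∑ m ∈ ({x, y, z} : Finset Char2), m) = x + y + z := by
    rw [Finset.sum_insert (by simp [hxy, hxz]), Finset.sum_insert (by simp [hyz]),
      Finset.sum_singleton, add_assoc]
  exact hsum ▸ h3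

/-- Two `C₄⁻` subsets of a 5-element set coincide. -/
lemma c4_unique {M T₁ T₂ : Finset Char2} (hM5 : M.card = 5)
    (h1 : T₁ ⊆ M) (h2 : T₂ ⊆ M) (c1 : C4minus T₁) (c2 : C4minus T₂) : T₁ = T₂ := by
  by_contra hne
  have hc1 : T₁.card = 4 := c1.2.1
  have hc2 : T₂.card = 4 := c2.2.1
  have hI1 : T₁ ∩ T₂ ⊆ T₁ := Finset.inter_subset_left
  have hI2 : T₁ ∩ T₂ ⊆ T₂ := Finset.inter_subset_right
  have hu : (T₁ ∪ T₂).card ≤ 5 := hM5 ▸ Finset.card_le_card (Finset.union_subset h1 h2)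
  have hsum := Finset.card_union_add_card_inter T₁ T₂
  have hIle : (T₁ ∩ T₂).card ≤ 4 := hc1 ▸ Finset.card_le_card hI1
  have hIne : (T₁ ∩ T₂).card ≠ 4 := by
    intro h4
    have e1 : T₁ ∩ T₂ = T₁ := Finset.eq_of_subset_of_card_le hI1 (by omega)
    have e2 : T₁ ∩ T₂ = T₂ := Finset.eq_of_subset_of_card_le hI2 (by omega)
    exact hne (e1 ▸ e2)
  have hI3 : (T₁ ∩ T₂).card = 3 := by omega
  obtain ⟨s1, s2, s3, h12, h13, h23, hIeq⟩ := Finset.card_eq_three.mp hI3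
  have hd1 : (T₁ \ (T₁ ∩ T₂)).card = 1 := by rw [Finset.card_sdiff_of_subset hI1]; omega
  have hd2 : (T₂ \ (T₁ ∩ T₂)).card = 1 := by rw [Finset.card_sdiff_of_subset hI2]; omega
  obtain ⟨a, haeq⟩ := Finset.card_eq_one.mp hd1
  obtain ⟨b, hbeq⟩ := Finset.card_eq_one.mp hd2
  have haT : a ∈ T₁ ∧ a ∉ T₁ ∩ T₂ :=
    Finset.mem_sdiff.mp (haeq ▸ Finset.mem_singleton_self a)
  have hbT : b ∈ T₂ ∧ b ∉ T₁ ∩ T₂ :=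
    Finset.mem_sdiff.mp (hbeq ▸ Finset.mem_singleton_self b)
  have hab : a ≠ b := by
    rintro rfl
    exact haT.2 (Finset.mem_inter.mpr ⟨haT.1, hbT.1⟩)
  have hs1I : s1 ∈ T₁ ∩ T₂ := by simp [hIeq]
  have hs2I : s2 ∈ T₁ ∩ T₂ := by simp [hIeq]
  have hs3I : s3 ∈ T₁ ∩ T₂ := by simp [hIeq]
  have has1 : a ≠ s1 := by rintro rfl; exact haT.2 hs1I
  have has2 : a ≠ s2 := by rintro rfl; exact haT.2 hs2I
  have has3 : a ≠ s3 := by rintro rfl; exact haT.2 hs3I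
  have hbs1 : b ≠ s1 := by rintro rfl; exact hbT.2 hs1I
  have hbs2 : b ≠ s2 := by rintro rfl; exact hbT.2 hs2I
  have hbs3 : b ≠ s3 := by rintro rfl; exact hbT.2 hs3I
  exact key5 (even_of_mem (c1.1 (hI1 hs1I))) (even_of_mem (c1.1 (hI1 hs2I)))
    (even_of_mem (c1.1 (hI1 hs3I))) (even_of_mem (c1.1 haT.1)) (even_of_mem (c2.1 hbT.1)) hab
    (oddTriple c1 (hI1 hs1I) (hI1 hs2I) (hI1 hs3I) h12 h13 h23)
    (oddTriple c1 (hI1 hs1I) (hI1 hs2I) haT.1 h12 has1.symm has2.symm)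
    (oddTriple c1 (hI1 hs1I) (hI1 hs3I) haT.1 h13 has1.symm has3.symm)
    (oddTriple c1 (hI1 hs2I) (hI1 hs3I) haT.1 h23 has2.symm has3.symm)
    (oddTriple c2 (hI2 hs1I) (hI2 hs2I) hbT.1 h12 hbs1.symm hbs2.symm)
    (oddTriple c2 (hI2 hs1I) (hI2 hs3I) hbT.1 h13 hbs1.symm hbs3.symm)
    (oddTriple c2 (hI2 hs2I) (hI2 hs3I) hbT.1 h23 hbs2.symm hbs3.symm)

theorem no_C4minus_of_not_C5minus (M : Finset Char2) (hM : M ⊆ EvenChars)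
    (hcard : M.card = 5) (h : ¬ C5minus M) :
    ∀ T ⊆ M, ¬ C4minus T := by
  intro T hT hC4
  apply h
  refine ⟨hM, hcard, T, ⟨hT, hC4⟩, ?_⟩
  rintro T' ⟨hT', hC4'⟩
  exact c4_unique hcard hT' hT hC4' hC4
end

section
/- Let M₁ ∈ C₆⁺ and M₂ ∈ C₄⁻ with M₂ different from the complement of M₁ in the set of 10 even 2-characteristics. Then |M₁ ∩ M₂| ∈ {2, 3}, and: (1) if |M₁ ∩ M₂| = 3 then M₁ △ M₂ ∈ C₄⁻; (2) if |M₁ ∩ M₂| = 2 then M₁ △ M₂ ∈ C₆⁺. -/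
open scoped Classical

/-
`C₄⁻` has exactly fifteen members. With `A = EvenChars \ M₁`, the sets
`A` and `M₂` are distinct members of `C₄⁻`, `M₁ ∩ M₂ = M₂ \ A` and
`M₁ △ M₂ = EvenChars \ (A △ M₂)`. A finite check over pairs shows that two distinct members `A`,
`B` of `C₄⁻` either meet in one point, and then `EvenChars \ (A △ B) ∈ C₄⁻`, or meet in two
points, and then `A △ B ∈ C₄⁻`. (The fifteen sets correspond to the duads of a six-element set
and the even characteristics to its splittings into two triples; two duads share a point or are
disjoint.)
-/

theorem Finset.symmDiff_sdiff_left_of_subset {α : Type*} [DecidableEq α] {E A B : Finset α}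
    (hB : B ⊆ E) : symmDiff (E \ A) B = E \ symmDiff A B := by
  ext x
  have := @hB x
  simp only [Finset.mem_symmDiff, Finset.mem_sdiff]
  tauto

instance inst_s14 : DecidablePred IsEvenChar := fun _ => inferInstanceAs (Decidable (_ = _))

instance : DecidablePred IsOddChar := fun _ => inferInstanceAs (Decidable ¬_)

theorem evenChars_eq : EvenChars =
    {((0, 0), (0, 0)), ((0, 0), (0, 1)), ((0, 0), (1, 0)), ((0, 0), (1, 1)), ((0, 1), (0, 0)),
      ((0, 1), (1, 0)), ((1, 0), (0, 0)), ((1, 0), (0, 1)), ((1, 1), (0, 0)), ((1, 1), (1, 1))} := by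
  ext m
  simp only [EvenChars, Finset.mem_filter, Finset.mem_univ, true_and]
  revert m
  decide

theorem card_evenChars : EvenChars.card = 10 := by
  rw [evenChars_eq]
  rfl

def evenTriples (M : Finset Char2) : Finset (Finset Char2) :=
  (M.powersetCard 3).filter fun T => IsEvenChar (∑ m ∈ T, m)

theorem C4minus_iff {M : Finset Char2} :
    C4minus M ↔ M ∈ EvenChars.powersetCard 4 ∧ evenTriples M = ∅ := by
  simp only [C4minus, C3minus, IsOddChar, evenTriples, Finset.mem_powersetCard,
    Finset.filter_eq_empty_iff, and_assoc]
  refine and_congr_right fun hM => and_congr_right fun _ => ?_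
  exact ⟨fun h T hT => (h T hT.1 hT.2).2.2,
    fun h T hT hT3 => ⟨hT.trans hM, hT3, h ⟨hT, hT3⟩⟩⟩

def c4minusList : List (Finset Char2) :=
  [{((0, 0), (0, 0)), ((0, 0), (0, 1)), ((0, 1), (0, 0)), ((1, 1), (1, 1))},
   {((0, 0), (0, 0)), ((0, 0), (0, 1)), ((0, 1), (1, 0)), ((1, 1), (0, 0))},
   {((0, 0), (0, 0)), ((0, 0), (1, 0)), ((1, 0), (0, 0)), ((1, 1), (1, 1))},
   {((0, 0), (0, 0)), ((0, 0), (1, 0)), ((1, 0), (0, 1)), ((1, 1), (0, 0))},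
   {((0, 0), (0, 0)), ((0, 0), (1, 1)), ((0, 1), (0, 0)), ((1, 0), (0, 1))},
   {((0, 0), (0, 0)), ((0, 0), (1, 1)), ((0, 1), (1, 0)), ((1, 0), (0, 0))},
   {((0, 0), (0, 1)), ((0, 0), (1, 0)), ((0, 1), (0, 0)), ((1, 0), (0, 0))},
   {((0, 0), (0, 1)), ((0, 0), (1, 0)), ((0, 1), (1, 0)), ((1, 0), (0, 1))},
   {((0, 0), (0, 1)), ((0, 0), (1, 1)), ((1, 0), (0, 0)), ((1, 1), (0, 0))},
   {((0, 0), (0, 1)), ((0, 0), (1, 1)), ((1, 0), (0, 1)), ((1, 1), (1, 1))},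
   {((0, 0), (1, 0)), ((0, 0), (1, 1)), ((0, 1), (0, 0)), ((1, 1), (0, 0))},
   {((0, 0), (1, 0)), ((0, 0), (1, 1)), ((0, 1), (1, 0)), ((1, 1), (1, 1))},
   {((0, 1), (0, 0)), ((0, 1), (1, 0)), ((1, 0), (0, 0)), ((1, 0), (0, 1))},
   {((0, 1), (0, 0)), ((0, 1), (1, 0)), ((1, 1), (0, 0)), ((1, 1), (1, 1))},
   {((1, 0), (0, 0)), ((1, 0), (0, 1)), ((1, 1), (0, 0)), ((1, 1), (1, 1))}]

-- `decide +kernel` skips the elaborator's evaluation of the instance, which is far too slow here.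
theorem C4minus_iff_mem_c4minusList {M : Finset Char2} : C4minus M ↔ M ∈ c4minusList := by
  have hfilter : (EvenChars.powersetCard 4).filter (evenTriples · = ∅) = c4minusList.toFinset := by
    rw [evenChars_eq]
    decide +kernel
  rw [C4minus_iff, ← List.mem_toFinset, ← hfilter, Finset.mem_filter]

theorem c4minusList_pairwise : c4minusList.Pairwise fun A B =>
    ((A ∩ B).card = 1 ∧ C4minus (EvenChars \ symmDiff A B)) ∨
      ((A ∩ B).card = 2 ∧ C4minus (symmDiff A B)) := by
  simp only [C4minus_iff_mem_c4minusList]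
  rw [evenChars_eq]
  decide +kernel

theorem C4minus_inter_symmDiff {A B : Finset Char2} (hA : C4minus A) (hB : C4minus B)
    (hAB : A ≠ B) :
    ((A ∩ B).card = 1 ∧ C4minus (EvenChars \ symmDiff A B)) ∨
      ((A ∩ B).card = 2 ∧ C4minus (symmDiff A B)) := by
  refine @List.Pairwise.forall _ _ _ ⟨fun A B h => ?_⟩ c4minusList_pairwise _
    (C4minus_iff_mem_c4minusList.1 hA) _ (C4minus_iff_mem_c4minusList.1 hB) hAB
  rwa [Finset.inter_comm, symmDiff_comm]

theorem C6plus_sdiff_of_C4minus {M : Finset Char2} (hM : C4minus M) :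
    C6plus (EvenChars \ M) := by
  refine ⟨Finset.sdiff_subset, ?_, by rwa [sdiff_sdiff_eq_self hM.1]⟩
  rw [Finset.card_sdiff_of_subset hM.1, card_evenChars, hM.2.1]

theorem C6plus_C4minus_symmDiff_cases (M₁ M₂ : Finset Char2)
    (h₁ : C6plus M₁) (h₂ : C4minus M₂) (hne : M₂ ≠ EvenChars \ M₁) :
    ((M₁ ∩ M₂).card = 2 ∨ (M₁ ∩ M₂).card = 3) ∧
    ((M₁ ∩ M₂).card = 3 → C4minus ((M₁ ∪ M₂) \ (M₁ ∩ M₂))) ∧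
    ((M₁ ∩ M₂).card = 2 → C6plus ((M₁ ∪ M₂) \ (M₁ ∩ M₂))) := by
  obtain ⟨hM₁, -, hA⟩ := h₁
  have hM₂ : M₂ ⊆ EvenChars := h₂.1
  set A := EvenChars \ M₁
  have hM₁A : M₁ = EvenChars \ A := (sdiff_sdiff_eq_self hM₁).symm
  have hinter : (M₁ ∩ M₂).card = 4 - (A ∩ M₂).card := by
    rw [hM₁A, Finset.sdiff_inter_right_comm, Finset.inter_eq_right.2 hM₂, Finset.card_sdiff,
      h₂.2.1]
  have hsymmDiff : (M₁ ∪ M₂) \ (M₁ ∩ M₂) = EvenChars \ symmDiff A M₂ := by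
    rw [← Finset.symmDiff_sdiff_left_of_subset hM₂, ← hM₁A, symmDiff_eq_sup_sdiff_inf,
      Finset.sup_eq_union, Finset.inf_eq_inter]
  rw [hinter, hsymmDiff]
  rcases C4minus_inter_symmDiff hA h₂ (Ne.symm hne) with ⟨h1, hC⟩ | ⟨h2, hC⟩
  · rw [h1]
    exact ⟨Or.inr rfl, fun _ => hC, by norm_num⟩
  · rw [h2]
    exact ⟨Or.inl rfl, by norm_num, fun _ => C6plus_sdiff_of_C4minus hC⟩
end

section
/- Let S be a finite set of more than 5 distinct 2-element sets of odd 2-characteristics such that ∑_{N ∈ S} S(N) = 0, where S({n₁, n₂}) := n₁ + n₂. Then there exists a nonempty proper subset T ⊊ S with ∑_{N ∈ T} S(N) = 0. (This is the combinatorial content of the statement that remarkable factors of degree greater than 5 are reducible: since S(N) ≠ 0 for every 2-element set N of odd characteristics and the S(N) live in the 4-dimensional ZMod 2 vector space (ZMod 2)² × (ZMod 2)², any family of more than 5 of them summing to zero contains a proper nonempty subfamily summing to zero.) -/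
open scoped Classical

/-
Pigeonhole: the sums `S(N)` live in `(ZMod 2)⁴`, which has `16 < 2⁵` elements, so among the 32
subfamilies of any five members of `S` two distinct ones, `A` and `B`, have the same sum. Then
`A ∆ B` is a nonempty subfamily of at most five members, hence proper, and it sums to `0` because
every element of `(ZMod 2)⁴` is its own negative.
-/

section ExponentTwo

variable {ι G : Type*} [AddCommGroup G]

theorem Finset.sum_symmDiff_of_add_self [DecidableEq ι] (h2 : ∀ x : G, x + x = 0)
    (f : ι → G) (A B : Finset ι) :
    ∑ i ∈ symmDiff A B, f i = ∑ i ∈ A, f i + ∑ i ∈ B, f i := by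
  rw [symmDiff_def, Finset.sup_eq_union, Finset.sum_union disjoint_sdiff_sdiff,
    ← Finset.sum_inter_add_sum_sdiff A B f, ← Finset.sum_inter_add_sum_sdiff B A f,
    Finset.inter_comm B A, add_add_add_comm, h2, zero_add]

theorem Finset.exists_nonempty_subset_sum_eq_zero_of_card_lt [Fintype G] [DecidableEq ι]
    (h2 : ∀ x : G, x + x = 0) (f : ι → G) (s : Finset ι) (hs : Fintype.card G < 2 ^ s.card) :
    ∃ t ⊆ s, t.Nonempty ∧ ∑ i ∈ t, f i = 0 := by
  obtain ⟨A, hA, B, hB, hAB, hsumAB⟩ :=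
    Finset.exists_ne_map_eq_of_card_lt_of_maps_to (t := Finset.univ)
      (by rwa [Finset.card_univ, Finset.card_powerset])
      (fun A _ => Finset.mem_coe.2 (Finset.mem_univ (∑ i ∈ A, f i)))
  rw [Finset.mem_powerset] at hA hB
  refine ⟨symmDiff A B, Finset.symmDiff_subset_union.trans (Finset.union_subset hA hB),
    Finset.nonempty_iff_ne_empty.2 (symmDiff_eq_bot.not.2 hAB), ?_⟩
  rw [Finset.sum_symmDiff_of_add_self h2, hsumAB, h2]

end ExponentTwo

theorem remarkable_factor_reducible_general (S : Finset (Finset Char2))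
    (hS : 5 < S.card) :
    ∃ T : Finset (Finset Char2), T ⊆ S ∧ T ≠ ∅ ∧ T ≠ S ∧ ∑ N ∈ T, ∑ n ∈ N, n = 0 := by
  obtain ⟨S₅, hS₅S, hS₅card⟩ := Finset.exists_subset_card_eq hS.le
  obtain ⟨T, hTS₅, hT, hTsum⟩ :=
    Finset.exists_nonempty_subset_sum_eq_zero_of_card_lt (by decide)
      (fun N : Finset Char2 => ∑ n ∈ N, n) S₅ (by simp [hS₅card])
  refine ⟨T, hTS₅.trans hS₅S, hT.ne_empty, ?_, hTsum⟩
  rintro rfl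
  have := Finset.card_le_card hTS₅
  omega

theorem remarkable_factor_reducible (S : Finset (Finset Char2))
    (hcard2 : ∀ N ∈ S, N.card = 2)
    (hodd : ∀ N ∈ S, ∀ n ∈ N, IsOddChar n)
    (hS : 5 < S.card)
    (hsum : ∑ N ∈ S, ∑ n ∈ N, n = 0) :
    ∃ T : Finset (Finset Char2), T ⊆ S ∧ T ≠ ∅ ∧ T ≠ S ∧ ∑ N ∈ T, ∑ n ∈ N, n = 0 :=
  remarkable_factor_reducible_general S hS
end
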